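/- arXiv:2603.19171 — 5 statements merged into one kernel-verified Lean document; each statement's English description precedes it below -/
import Mathlib

section
/- Let m, n be positive natural numbers with m ≤ n and m dividing n. Set A = {0, 1, ..., n} and B = {0, m, 2m, ..., n}. Then for every real x ∈ [0,1] there exist a ∈ A − A and b ∈ (B − B) \ {0} such that |x − a/b| ≤ m/(|b|·n). -/
/-!
Apply Dirichlet's theorem to `m * x` with denominators up to `N = ⌊n / m⌋`: some `0 < k ≤ N` and
integer `j` satisfy `|k m x - j| ≤ 1 / (N + 1) < m / n ≤ 1`. Then `b = k m` is a nonzero multiple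
of `m` in `[0, n]`, `a = j` lies within distance `1` of `k m x ∈ [0, n]` and hence in `[0, n]`, and
dividing by `k m` gives the bound.
-/

open Set

theorem Int.mem_Icc_of_abs_sub_lt_one {a b j : ℤ} {t : ℝ} (ht : t ∈ Icc (a : ℝ) b)
    (h : |t - j| < 1) : j ∈ Icc a b := by
  obtain ⟨hlo, hhi⟩ := abs_lt.mp h
  have ha : (a : ℝ) - 1 < j := by linarith [ht.1]
  have hb : (j : ℝ) < b + 1 := by linarith [ht.2]
  constructor
  · have : a - 1 < j := by exact_mod_cast ha
    omega
  · have : j < b + 1 := by exact_mod_cast hb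
    omega

theorem abs_sub_div_le_of_abs_mul_sub_le {x c y δ : ℝ} (hc : 0 < c) (h : |c * x - y| ≤ δ) :
    |x - y / c| ≤ δ / c := by
  have hx : x - y / c = (c * x - y) / c := by field_simp
  rw [hx, abs_div, abs_of_pos hc]
  exact div_le_div_of_nonneg_right h hc.le

theorem one_div_div_add_one_lt {m n : ℕ} (hm : 0 < m) (hn : 0 < n) :
    1 / ((n / m : ℕ) + 1 : ℝ) < m / n := by
  have hlt : n < (n / m + 1) * m := by
    rw [add_mul, one_mul]
    exact Nat.lt_div_mul_add hm
  have hltR : (n : ℝ) < ((n / m : ℕ) + 1) * m := by exact_mod_cast hlt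
  rw [div_lt_div_iff₀ (by positivity) (by positivity)]
  linarith

theorem exists_int_abs_sub_div_mul_le (x : ℝ) {m n : ℕ} (hm : 0 < m) (hmn : m ≤ n) :
    ∃ j k : ℤ, 0 < k ∧ k * m ≤ n ∧ |k * m * x - j| < 1 ∧
      |x - j / (k * m)| ≤ m / (k * m * n) := by
  have hn : 0 < n := hm.trans_le hmn
  obtain ⟨j, k, hk, hkN, hdir⟩ := Real.exists_int_int_abs_mul_sub_le (m * x) (Nat.div_pos hmn hm)
  have hdir_lt : |k * m * x - j| < m / n := by
    rw [mul_assoc]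
    exact hdir.trans_lt (one_div_div_add_one_lt hm hn)
  have hkm : (0 : ℝ) < k * m := by positivity
  refine ⟨j, k, hk, ?_, ?_, ?_⟩
  · calc k * (m : ℤ) ≤ (n / m : ℕ) * m := by gcongr
      _ ≤ n := by exact_mod_cast Nat.div_mul_le_self n m
  · exact hdir_lt.trans_le (div_le_one_of_le₀ (by exact_mod_cast hmn) (by positivity))
  · calc |x - j / (k * m)| ≤ (m / n) / (k * m) :=
          abs_sub_div_le_of_abs_mul_sub_le hkm hdir_lt.le
      _ = m / (k * m * n) := by field_simp

theorem stmt0_general (m n : ℕ) (hm : 0 < m) (hmn : m ≤ n)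
    (x : ℝ) (hx : x ∈ Set.Icc (0:ℝ) 1) :
    ∃ a b : ℤ,
      (∃ a₁ a₂ : ℤ, 0 ≤ a₁ ∧ a₁ ≤ (n:ℤ) ∧ 0 ≤ a₂ ∧ a₂ ≤ (n:ℤ) ∧ a = a₁ - a₂) ∧
      (∃ b₁ b₂ : ℤ, 0 ≤ b₁ ∧ b₁ ≤ (n:ℤ) ∧ (m:ℤ) ∣ b₁ ∧
        0 ≤ b₂ ∧ b₂ ≤ (n:ℤ) ∧ (m:ℤ) ∣ b₂ ∧ b = b₁ - b₂) ∧
      b ≠ 0 ∧ |x - (a:ℝ) / (b:ℝ)| ≤ (m:ℝ) / (|(b:ℝ)| * n) := by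
  obtain ⟨j, k, hk, hkm, hround, happrox⟩ := exists_int_abs_sub_div_mul_le x hm hmn
  have hb : (0 : ℤ) < k * m := by positivity
  have hbR : (0 : ℝ) < k * m := by exact_mod_cast hb
  have hkmx : (k * m * x : ℝ) ∈ Icc ((0 : ℤ) : ℝ) (n : ℤ) := by
    have hkmR : (k * m : ℝ) ≤ n := by exact_mod_cast hkm
    constructor <;> push_cast <;> nlinarith [hx.1, hx.2]
  obtain ⟨hj0, hjn⟩ := Int.mem_Icc_of_abs_sub_lt_one hkmx hround
  refine ⟨j, k * m, ⟨j, 0, hj0, hjn, le_rfl, by positivity, by ring⟩,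
    ⟨k * m, 0, hb.le, hkm, dvd_mul_left _ _, le_rfl, by positivity, dvd_zero _, by ring⟩,
    hb.ne', ?_⟩
  rwa [Int.cast_mul, Int.cast_natCast, abs_of_pos hbR]

/-- Asymmetric variant of Dirichlet's approximation theorem:
for `A = {0,…,n}` and `B = {0,m,2m,…,n}` (with `m ∣ n`, `m ≤ n`), every `x ∈ [0,1]`
is approximated by a ratio `a/b` with `a ∈ A − A`, `b ∈ (B − B) \ {0}`, up to `m/(|b|·n)`. -/
theorem stmt0 (m n : ℕ) (hm : 0 < m) (hn : 0 < n) (hmn : m ≤ n) (hdvd : m ∣ n)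
    (x : ℝ) (hx : x ∈ Set.Icc (0:ℝ) 1) :
    ∃ a b : ℤ,
      (∃ a₁ a₂ : ℤ, 0 ≤ a₁ ∧ a₁ ≤ (n:ℤ) ∧ 0 ≤ a₂ ∧ a₂ ≤ (n:ℤ) ∧ a = a₁ - a₂) ∧
      (∃ b₁ b₂ : ℤ, 0 ≤ b₁ ∧ b₁ ≤ (n:ℤ) ∧ (m:ℤ) ∣ b₁ ∧
        0 ≤ b₂ ∧ b₂ ≤ (n:ℤ) ∧ (m:ℤ) ∣ b₂ ∧ b = b₁ - b₂) ∧
      b ≠ 0 ∧ |x - (a:ℝ) / (b:ℝ)| ≤ (m:ℝ) / (|(b:ℝ)| * n) :=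
  stmt0_general m n hm hmn x hx
end

section
/- Let m, n be positive natural numbers with m ≤ n and m dividing n, A = {0,...,n}, B = {0, m, 2m, ..., n}. Then the set S = [0,1] ∩ { a/b : a ∈ A − A, b ∈ (B − B) \ {0} } satisfies: the number of intervals of length m/n² needed to cover S is at least c·n²/m for some absolute constant c > 0. -/
/-!
Put `Q = n / m`. The points `(r + t/q)/m` with `0 ≤ r < m` and `t/q` a reduced fraction in
`(0, 1]` with `q ≤ Q` have the form `(r q + t)/(q m)` with `r q + t ≤ n` and `q m ∈ B`, so they lie
in `S`. Two distinct ones differ by at least `1/(q q' m) ≥ 1/(Q² m) = m/n²`, so an interval of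
length `m/n²` contains at most two of them, and the covering number is at least half their number
`m · #{t/q}`. Finally at least `Q²/12` pairs in `[1, Q]²` are coprime, because those with
`gcd = d ≥ 2` number at most `∑_{d ≥ 2} (Q/d)² ≤ 11 Q²/12`; hence the covering number is
`≥ m Q²/48 = n²/(48 m)`.
-/

/-- The `ρ`-covering number of `X ⊂ ℝ`: the least number of intervals of length `ρ`
needed to cover `X`. -/
noncomputable def covN (ρ : ℝ) (X : Set ℝ) : ℕ :=
  sInf {k : ℕ | ∃ s : Finset ℝ, s.card = k ∧ X ⊆ ⋃ p ∈ s, Set.Icc p (p + ρ)}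

open Finset

section Covering

variable {ρ : ℝ}

lemma eq_or_eq_add_of_le_abs_sub {p x y : ℝ} (hx : x ∈ Set.Icc p (p + ρ))
    (hy : y ∈ Set.Icc p (p + ρ)) (h : ρ ≤ |x - y|) : x = p ∨ x = p + ρ := by
  obtain ⟨hx₁, hx₂⟩ := hx
  obtain ⟨hy₁, hy₂⟩ := hy
  rcases abs_cases (x - y) with ⟨he, -⟩ | ⟨he, -⟩ <;> rw [he] at h
  · right; linarith
  · left; linarith

lemma card_le_two_of_subset_Icc {p : ℝ} {F : Finset ℝ} (hF : (F : Set ℝ) ⊆ Set.Icc p (p + ρ))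
    (hsep : (F : Set ℝ).Pairwise fun x y => ρ ≤ |x - y|) : #F ≤ 2 := by
  by_contra! hF₃
  obtain ⟨a, ha, b, hb, c, hc, hab, hac, hbc⟩ := two_lt_card.mp hF₃
  have endpoint : ∀ x ∈ F, ∀ y ∈ F, x ≠ y → x = p ∨ x = p + ρ := fun x hx y hy hxy =>
    eq_or_eq_add_of_le_abs_sub (hF hx) (hF hy) (hsep hx hy hxy)
  rcases endpoint a ha b hb hab with ha' | ha' <;>
    rcases endpoint b hb a ha hab.symm with hb' | hb' <;>
    rcases endpoint c hc a ha hac.symm with hc' | hc' <;> simp_all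

lemma card_le_two_mul_card_of_subset_biUnion {P s : Finset ℝ}
    (hsep : (P : Set ℝ).Pairwise fun x y => ρ ≤ |x - y|)
    (hcov : (P : Set ℝ) ⊆ ⋃ p ∈ s, Set.Icc p (p + ρ)) : #P ≤ 2 * #s := by
  have hex : ∀ x ∈ P, ∃ p ∈ s, x ∈ Set.Icc p (p + ρ) := fun x hx =>
    bex_def.mp (Set.mem_iUnion₂.mp (hcov hx))
  choose! f hfs hfx using hex
  refine card_le_mul_card_image_of_maps_to hfs 2 fun p _ =>
    card_le_two_of_subset_Icc (p := p) ?_ (hsep.mono ?_)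
  · intro x hx
    rw [coe_filter] at hx
    exact hx.2 ▸ hfx x hx.1
  · exact coe_subset.mpr (filter_subset _ _)

lemma exists_finset_Icc_cover (hρ : 0 < ρ) :
    ∃ s : Finset ℝ, Set.Icc (0 : ℝ) 1 ⊆ ⋃ p ∈ s, Set.Icc p (p + ρ) := by
  refine ⟨(range (⌊ρ⁻¹⌋₊ + 1)).image fun i : ℕ => (i : ℝ) * ρ, fun x ⟨hx₀, hx₁⟩ => ?_⟩
  have hxρ : 0 ≤ x / ρ := div_nonneg hx₀ hρ.le
  have hi : x / ρ ≤ ρ⁻¹ := by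
    rw [div_eq_mul_inv]; exact mul_le_of_le_one_left (inv_nonneg.mpr hρ.le) hx₁
  refine Set.mem_iUnion₂.mpr ⟨⌊x / ρ⌋₊ * ρ,
    mem_image_of_mem _ (mem_range.mpr (Nat.lt_succ_of_le (Nat.floor_le_floor hi))), ?_, ?_⟩
  · exact (le_div_iff₀ hρ).mp (Nat.floor_le hxρ)
  · have := (div_lt_iff₀ hρ).mp (Nat.lt_floor_add_one (x / ρ))
    linarith

lemma card_le_two_mul_covN (hρ : 0 < ρ) {X : Set ℝ} (hX : X ⊆ Set.Icc 0 1) {P : Finset ℝ}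
    (hPX : (P : Set ℝ) ⊆ X) (hsep : (P : Set ℝ).Pairwise fun x y => ρ ≤ |x - y|) :
    #P ≤ 2 * covN ρ X := by
  obtain ⟨s₀, hs₀⟩ := exists_finset_Icc_cover hρ
  obtain ⟨s, hs, hcov⟩ := Nat.sInf_mem (s := {k : ℕ | ∃ s : Finset ℝ, #s = k ∧
    X ⊆ ⋃ p ∈ s, Set.Icc p (p + ρ)}) ⟨_, s₀, rfl, hX.trans hs₀⟩
  rw [covN, ← hs]
  exact card_le_two_mul_card_of_subset_biUnion hsep (hPX.trans hcov)

end Covering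

lemma one_div_mul_le_abs_div_sub_div {a a' : ℤ} {b b' : ℕ} (hb : 0 < b) (hb' : 0 < b')
    (h : (a : ℝ) / b ≠ a' / b') : 1 / ((b : ℝ) * b') ≤ |(a : ℝ) / b - a' / b'| := by
  have hne : a * b' - b * a' ≠ 0 := by
    contrapose! h
    rw [div_eq_div_iff (by positivity) (by positivity)]
    exact_mod_cast by linarith
  have h₁ : (1 : ℝ) ≤ |((a * b' - b * a' : ℤ) : ℝ)| := by exact_mod_cast Int.one_le_abs hne
  push_cast at h₁
  rw [div_sub_div _ _ (by positivity) (by positivity), abs_div,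
    abs_of_pos (by positivity : (0 : ℝ) < b * b')]
  exact div_le_div_of_nonneg_right h₁ (by positivity)

lemma Nat.Coprime.eq_of_div_eq_div {t q t' q' : ℕ} (h : t.Coprime q) (h' : t'.Coprime q')
    (hq : 0 < q) (hq' : 0 < q') (he : (t : ℝ) / q = t' / q') : t = t' ∧ q = q' := by
  have := Rat.div_int_inj (a := t) (b := q) (c := t') (d := q') (by exact_mod_cast hq)
    (by exact_mod_cast hq') h h' (Rat.cast_injective (α := ℝ) (by push_cast; exact he))
  exact_mod_cast this

lemma Nat.eq_of_cast_add_eq_cast_add {r r' : ℕ} {x x' : ℝ} (hx : x ∈ Set.Ioc 0 1)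
    (hx' : x' ∈ Set.Ioc 0 1) (h : (r : ℝ) + x = r' + x') : r = r' := by
  have h₁ : r < r' + 1 := by exact_mod_cast (by linarith [hx.1, hx'.2] : (r : ℝ) < r' + 1)
  have h₂ : r' < r + 1 := by exact_mod_cast (by linarith [hx.2, hx'.1] : (r' : ℝ) < r + 1)
  omega

def coprimePairs (Q : ℕ) : Finset (ℕ × ℕ) := {p ∈ Icc 1 Q ×ˢ Icc 1 Q | p.1.Coprime p.2}

def fareyPairs (Q : ℕ) : Finset (ℕ × ℕ) := {p ∈ coprimePairs Q | p.1 ≤ p.2}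

lemma mem_fareyPairs {Q t q : ℕ} :
    (t, q) ∈ fareyPairs Q ↔ 1 ≤ t ∧ t ≤ q ∧ q ≤ Q ∧ t.Coprime q := by
  simp only [fareyPairs, coprimePairs, mem_filter, mem_product, mem_Icc]
  constructor
  · rintro ⟨⟨⟨⟨ht, -⟩, -, hq⟩, hc⟩, htq⟩
    exact ⟨ht, htq, hq, hc⟩
  · rintro ⟨ht, htq, hq, hc⟩
    exact ⟨⟨⟨⟨ht, htq.trans hq⟩, ht.trans htq, hq⟩, hc⟩, htq⟩

lemma Icc_product_subset_coprimePairs_union (Q : ℕ) :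
    Icc 1 Q ×ˢ Icc 1 Q ⊆ coprimePairs Q ∪ (Icc 2 Q).biUnion fun d =>
      (Icc 1 (Q / d) ×ˢ Icc 1 (Q / d)).image fun p => (d * p.1, d * p.2) := by
  rintro ⟨a, b⟩ hab
  simp only [mem_product, mem_Icc] at hab
  obtain ⟨⟨ha₁, haQ⟩, hb₁, hbQ⟩ := hab
  set g := a.gcd b
  have hg : 0 < g := Nat.gcd_pos_of_pos_left b ha₁
  have hga : g ≤ a := Nat.le_of_dvd ha₁ (Nat.gcd_dvd_left a b)
  have hgb : g ≤ b := Nat.le_of_dvd hb₁ (Nat.gcd_dvd_right a b)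
  rcases eq_or_ne g 1 with hg₁ | hg₁
  · exact mem_union_left _ (mem_filter.mpr ⟨by simp [*], hg₁⟩)
  refine mem_union_right _ (mem_biUnion.mpr ⟨g, mem_Icc.mpr ⟨by omega, by omega⟩,
    mem_image.mpr ⟨(a / g, b / g), ?_, ?_⟩⟩)
  · simp only [mem_product, mem_Icc]
    exact ⟨⟨Nat.div_pos hga hg, Nat.div_le_div_right haQ⟩,
      Nat.div_pos hgb hg, Nat.div_le_div_right hbQ⟩
  · rw [Nat.mul_div_cancel' (Nat.gcd_dvd_left a b), Nat.mul_div_cancel' (Nat.gcd_dvd_right a b)]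

lemma sq_le_card_coprimePairs_add_sum (Q : ℕ) :
    Q ^ 2 ≤ #(coprimePairs Q) + ∑ d ∈ Icc 2 Q, (Q / d) ^ 2 :=
  calc Q ^ 2 = #(Icc 1 Q ×ˢ Icc 1 Q) := by simp [sq]
    _ ≤ _ := card_le_card (Icc_product_subset_coprimePairs_union Q)
    _ ≤ _ := card_union_le _ _
    _ ≤ _ := by
      gcongr
      exact card_biUnion_le.trans (sum_le_sum fun d _ => card_image_le.trans (by simp [sq]))

lemma sum_Icc_two_inv_sq_le (Q : ℕ) : ∑ d ∈ Icc 2 Q, ((d : ℝ) ^ 2)⁻¹ ≤ 11 / 12 :=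
  calc ∑ d ∈ Icc 2 Q, ((d : ℝ) ^ 2)⁻¹ ≤ ∑ d ∈ insert 2 (Ioo 2 (Q + 1)), ((d : ℝ) ^ 2)⁻¹ := by
        refine sum_le_sum_of_subset_of_nonneg (fun d hd => ?_) fun _ _ _ => by positivity
        simp only [mem_Icc, mem_insert, mem_Ioo] at hd ⊢
        omega
    _ = 1 / 4 + ∑ d ∈ Ioo 2 (Q + 1), ((d : ℝ) ^ 2)⁻¹ := by
        rw [sum_insert (by simp)]; norm_num
    _ ≤ 1 / 4 + 2 / (2 + 1) := by gcongr; exact_mod_cast sum_Ioo_inv_sq_le 2 (Q + 1)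
    _ = 11 / 12 := by norm_num

lemma sq_le_twelve_mul_card_coprimePairs (Q : ℕ) : (Q : ℝ) ^ 2 ≤ 12 * #(coprimePairs Q) := by
  have hsum : ∑ d ∈ Icc 2 Q, (((Q / d : ℕ) : ℝ)) ^ 2 ≤ 11 / 12 * (Q : ℝ) ^ 2 :=
    calc ∑ d ∈ Icc 2 Q, (((Q / d : ℕ) : ℝ)) ^ 2
        ≤ ∑ d ∈ Icc 2 Q, (Q : ℝ) ^ 2 * ((d : ℝ) ^ 2)⁻¹ := sum_le_sum fun d _ => by
          rw [← div_eq_mul_inv, ← div_pow]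
          exact pow_le_pow_left₀ (by positivity) Nat.cast_div_le 2
      _ = (Q : ℝ) ^ 2 * ∑ d ∈ Icc 2 Q, ((d : ℝ) ^ 2)⁻¹ := (mul_sum _ _ _).symm
      _ ≤ (Q : ℝ) ^ 2 * (11 / 12) := by gcongr; exact sum_Icc_two_inv_sq_le Q
      _ = 11 / 12 * (Q : ℝ) ^ 2 := mul_comm _ _
  have hQ : ((Q ^ 2 : ℕ) : ℝ) ≤ _ := Nat.cast_le.mpr (sq_le_card_coprimePairs_add_sum Q)
  push_cast at hQ
  linarith

lemma card_coprimePairs_le_two_mul (Q : ℕ) : #(coprimePairs Q) ≤ 2 * #(fareyPairs Q) :=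
  calc #(coprimePairs Q) ≤ #(fareyPairs Q ∪ (fareyPairs Q).image Prod.swap) := by
        refine card_le_card fun p hp => ?_
        have hp' := mem_filter.mp hp
        rcases le_total p.1 p.2 with h | h
        · exact mem_union_left _ (mem_filter.mpr ⟨hp, h⟩)
        · refine mem_union_right _ (mem_image.mpr ⟨p.swap, mem_filter.mpr ⟨?_, h⟩, p.swap_swap⟩)
          simp only [coprimePairs, mem_filter, mem_product, Prod.fst_swap, Prod.snd_swap] at hp' ⊢
          exact ⟨hp'.1.symm, hp'.2.symm⟩
    _ ≤ #(fareyPairs Q) + #(fareyPairs Q) :=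
        (card_union_le _ _).trans (add_le_add le_rfl card_image_le)
    _ = 2 * #(fareyPairs Q) := (two_mul _).symm

/-- `(r, t, q) ↦ (r + t/q)/m`: over `range m ×ˢ fareyPairs Q` these are `m` translates of the
Farey fractions of order `Q`, shrunk into `[0, 1]`. -/
noncomputable def fareyPoint (m : ℕ) (u : ℕ × ℕ × ℕ) : ℝ := ((u.1 : ℝ) + u.2.1 / u.2.2) / m

lemma div_mem_Ioc_of_mem_fareyPairs {Q t q : ℕ} (h : (t, q) ∈ fareyPairs Q) :
    (t : ℝ) / q ∈ Set.Ioc 0 1 := by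
  obtain ⟨ht, htq, -⟩ := mem_fareyPairs.mp h
  have hq : (0 : ℝ) < q := by exact_mod_cast ht.trans htq
  exact ⟨by positivity, (div_le_one hq).mpr (by exact_mod_cast htq)⟩

lemma fareyPoint_injOn {m : ℕ} (hm : 0 < m) (Q : ℕ) :
    Set.InjOn (fareyPoint m) (range m ×ˢ fareyPairs Q : Finset _) := by
  rintro ⟨r, t, q⟩ hu ⟨r', t', q'⟩ hu' he
  rw [mem_coe, mem_product] at hu hu'
  have he' : (r : ℝ) + t / q = r' + t' / q' := by
    simpa [fareyPoint, hm.ne'] using he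
  obtain rfl := Nat.eq_of_cast_add_eq_cast_add (div_mem_Ioc_of_mem_fareyPairs hu.2)
    (div_mem_Ioc_of_mem_fareyPairs hu'.2) he'
  obtain ⟨ht, htq, -, hc⟩ := mem_fareyPairs.mp hu.2
  obtain ⟨ht', htq', -, hc'⟩ := mem_fareyPairs.mp hu'.2
  obtain ⟨rfl, rfl⟩ := hc.eq_of_div_eq_div hc' (by omega) (by omega) (add_left_cancel he')
  rfl

lemma pairwise_fareyPoint {m : ℕ} (hm : 0 < m) (Q : ℕ) :
    ((range m ×ˢ fareyPairs Q).image (fareyPoint m) : Set ℝ).Pairwise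
      fun x y => 1 / ((Q : ℝ) ^ 2 * m) ≤ |x - y| := by
  rintro _ hx _ hy hxy
  obtain ⟨⟨r, t, q⟩, hu, rfl⟩ := mem_image.mp hx
  obtain ⟨⟨r', t', q'⟩, hu', rfl⟩ := mem_image.mp hy
  obtain ⟨ht, htq, hqQ, -⟩ := mem_fareyPairs.mp (mem_product.mp hu).2
  obtain ⟨ht', htq', hqQ', -⟩ := mem_fareyPairs.mp (mem_product.mp hu').2
  have hm' : (0 : ℝ) < m := by exact_mod_cast hm
  have hfrac : ∀ r t q : ℕ, 0 < q → (r : ℝ) + t / q = ((r * q + t : ℤ) : ℝ) / (q : ℕ) := by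
    intro r t q hq
    push_cast
    field_simp
  have hne : (r : ℝ) + t / q ≠ r' + t' / q' := fun h => hxy (by simp only [fareyPoint, h])
  rw [hfrac r t q (by omega), hfrac r' t' q' (by omega)] at hne
  have hsep := one_div_mul_le_abs_div_sub_div (by omega) (by omega) hne
  simp only [fareyPoint]
  rw [hfrac r t q (by omega), hfrac r' t' q' (by omega), ← sub_div, abs_div, abs_of_pos hm']
  calc 1 / ((Q : ℝ) ^ 2 * m) ≤ 1 / ((q : ℝ) * q') / m := by
        rw [div_div]
        have hq : (0 : ℝ) < q := by exact_mod_cast ht.trans htq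
        have hq' : (0 : ℝ) < q' := by exact_mod_cast ht'.trans htq'
        gcongr
        rw [sq]
        gcongr
    _ ≤ _ := by gcongr

/-- `(A − A)/((B − B) ∖ {0})` for `A = {0, …, n}` and `B = mℤ ∩ [0, n]`. -/
def diffQuotients (m n : ℕ) : Set ℝ :=
  {x : ℝ | ∃ a b : ℤ,
    (∃ a₁ a₂ : ℤ, 0 ≤ a₁ ∧ a₁ ≤ (n:ℤ) ∧ 0 ≤ a₂ ∧ a₂ ≤ (n:ℤ) ∧ a = a₁ - a₂) ∧
    (∃ b₁ b₂ : ℤ, 0 ≤ b₁ ∧ b₁ ≤ (n:ℤ) ∧ (m:ℤ) ∣ b₁ ∧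
      0 ≤ b₂ ∧ b₂ ≤ (n:ℤ) ∧ (m:ℤ) ∣ b₂ ∧ b = b₁ - b₂) ∧
    b ≠ 0 ∧ x = (a:ℝ) / (b:ℝ)}

lemma fareyPoint_mem_Icc_inter_diffQuotients {m Q : ℕ} (hm : 0 < m) {u : ℕ × ℕ × ℕ}
    (hu : u ∈ range m ×ˢ fareyPairs Q) :
    fareyPoint m u ∈ Set.Icc 0 1 ∩ diffQuotients m (m * Q) := by
  obtain ⟨r, t, q⟩ := u
  obtain ⟨hr, hf⟩ := mem_product.mp hu
  obtain ⟨ht, htq, hqQ, -⟩ := mem_fareyPairs.mp hf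
  have hq : 0 < q := ht.trans htq
  have hnum : r * q + t ≤ m * q :=
    calc r * q + t ≤ (r + 1) * q := by rw [add_one_mul]; omega
      _ ≤ m * q := Nat.mul_le_mul_right q (mem_range.mp hr)
  have hden : m * q ≤ m * Q := Nat.mul_le_mul_left m hqQ
  have hx : fareyPoint m (r, t, q) = ((r * q + t : ℕ) : ℝ) / ((m * q : ℕ) : ℝ) := by
    simp only [fareyPoint]
    push_cast
    field_simp
  rw [hx]
  refine ⟨⟨by positivity, div_le_one_of_le₀ (by exact_mod_cast hnum) (by positivity)⟩,
    r * q + t, m * q, ⟨r * q + t, 0, by positivity, ?_, le_rfl, by positivity, by ring⟩,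
    ⟨m * q, 0, by positivity, ?_, dvd_mul_right _ _, le_rfl, by positivity, dvd_zero _, by ring⟩,
    by positivity, by push_cast; rfl⟩
  · exact_mod_cast hnum.trans hden
  · exact_mod_cast hden

/-- With `A = {0,…,n}` and `B = {0,m,2m,…,n}` (`m ∣ n`, `m ≤ n`), the set
`[0,1] ∩ (A−A)/((B−B)\{0})` has `(m/n²)`-covering number at least `c·n²/m`,
for an absolute constant `c > 0`. -/
theorem stmt1 :
    ∃ c : ℝ, 0 < c ∧ ∀ m n : ℕ, 0 < m → 0 < n → m ≤ n → m ∣ n →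
      c * (n:ℝ)^2 / m ≤
        (covN ((m:ℝ) / (n:ℝ)^2)
          (Set.Icc (0:ℝ) 1 ∩
            {x : ℝ | ∃ a b : ℤ,
              (∃ a₁ a₂ : ℤ, 0 ≤ a₁ ∧ a₁ ≤ (n:ℤ) ∧ 0 ≤ a₂ ∧ a₂ ≤ (n:ℤ) ∧ a = a₁ - a₂) ∧
              (∃ b₁ b₂ : ℤ, 0 ≤ b₁ ∧ b₁ ≤ (n:ℤ) ∧ (m:ℤ) ∣ b₁ ∧
                0 ≤ b₂ ∧ b₂ ≤ (n:ℤ) ∧ (m:ℤ) ∣ b₂ ∧ b = b₁ - b₂) ∧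
              b ≠ 0 ∧ x = (a:ℝ) / (b:ℝ)}) : ℝ) := by
  refine ⟨1 / 48, by norm_num, fun m n hm hn _ ⟨Q, hQ⟩ => ?_⟩
  subst hQ
  have hQ₀ : (0 : ℝ) < Q := by exact_mod_cast Nat.pos_of_mul_pos_left hn
  have hρ : (m : ℝ) / ((m * Q : ℕ) : ℝ) ^ 2 = 1 / ((Q : ℝ) ^ 2 * m) := by
    push_cast
    field_simp
  rw [hρ]
  show _ ≤ ((covN _ (Set.Icc 0 1 ∩ diffQuotients m (m * Q)) : ℕ) : ℝ)
  set P := (range m ×ˢ fareyPairs Q).image (fareyPoint m)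
  have hP : #P = m * #(fareyPairs Q) := by
    rw [card_image_of_injOn (fareyPoint_injOn hm Q), card_product, card_range]
  have hcov : #P ≤ 2 * covN (1 / ((Q : ℝ) ^ 2 * m)) (Set.Icc 0 1 ∩ diffQuotients m (m * Q)) := by
    refine card_le_two_mul_covN (by positivity) Set.inter_subset_left ?_ (pairwise_fareyPoint hm Q)
    intro _ hx
    obtain ⟨u, hu, rfl⟩ := mem_image.mp hx
    exact fareyPoint_mem_Icc_inter_diffQuotients hm hu
  rw [hP] at hcov
  have hcov' := (Nat.cast_le (α := ℝ)).mpr hcov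
  have hF := (Nat.cast_le (α := ℝ)).mpr (card_coprimePairs_le_two_mul Q)
  have hC := sq_le_twelve_mul_card_coprimePairs Q
  push_cast at hcov' hF ⊢
  calc 1 / 48 * ((m : ℝ) * Q) ^ 2 / m = (m : ℝ) * Q ^ 2 / 48 := by field_simp
    _ ≤ _ := by nlinarith
end

section
/- Let m, n be positive integers with m ≤ n and m | n, A = {0,...,n}, B = {0, m, ..., n}, and let c > 0. Then the Lebesgue measure of the set of x ∈ [0,1] that lie within distance 2m/(|b|n) of some ratio a/b with a ∈ (A−A), b ∈ (B−B)\{0}, |b| ≤ cn, and dist(a, b·[0,1]) ≤ 1/n, is at most K·c for an absolute constant K. -/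
open MeasureTheory
open scoped ENNReal

/-- 'Bad set' measure bound: with `A = {0,…,n}`, `B = {0,m,…,n}` (`m ∣ n`, `m ≤ n`)
and `c > 0`, the set of `x ∈ [0,1]` within distance `2m/(|b|n)` of some ratio `a/b`
with `a ∈ A−A`, `b ∈ (B−B)\{0}`, `|b| ≤ cn` and `dist(a, b·[0,1]) ≤ 1/n`
has Lebesgue measure at most `K·c` for an absolute constant `K`. -/
theorem stmt3 :
    ∃ K : ℝ, 0 < K ∧ ∀ (m n : ℕ) (c : ℝ), 0 < m → 0 < n → m ≤ n → m ∣ n → 0 < c →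
      (volume {x : ℝ | x ∈ Set.Icc (0:ℝ) 1 ∧ ∃ a b : ℤ,
        (∃ a₁ a₂ : ℤ, 0 ≤ a₁ ∧ a₁ ≤ (n:ℤ) ∧ 0 ≤ a₂ ∧ a₂ ≤ (n:ℤ) ∧ a = a₁ - a₂) ∧
        (∃ b₁ b₂ : ℤ, 0 ≤ b₁ ∧ b₁ ≤ (n:ℤ) ∧ (m:ℤ) ∣ b₁ ∧
          0 ≤ b₂ ∧ b₂ ≤ (n:ℤ) ∧ (m:ℤ) ∣ b₂ ∧ b = b₁ - b₂) ∧
        b ≠ 0 ∧ |(b:ℝ)| ≤ c * n ∧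
        (∃ y ∈ Set.Icc (0:ℝ) 1, |(a:ℝ) - (b:ℝ) * y| ≤ 1 / n) ∧
        |x - (a:ℝ) / (b:ℝ)| ≤ 2 * m / (|(b:ℝ)| * n)}).toReal ≤ K * c := by
  refine ⟨40, by norm_num, ?_⟩
  intro m n c hm hn hmn hdvd hc
  have hmpos : (0:ℝ) < m := by exact_mod_cast hm
  have hnpos : (0:ℝ) < n := by exact_mod_cast hn
  set M : ℤ := ⌊c * n / m⌋ with hM
  have hMnn : 0 ≤ M := Int.floor_nonneg.mpr (by positivity)
  set Fk : Finset ℤ := (Finset.Icc (-M) M).erase 0 with hFk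
  set T : Set ℝ := ⋃ k ∈ Fk, ⋃ a ∈ Finset.Icc (-(|(m:ℤ) * k| + 1)) (|(m:ℤ) * k| + 1),
      Metric.closedBall ((a:ℝ) / ((m:ℝ) * k)) (2 * m / (|(m:ℝ) * k| * n)) with hT
  have hsub : {x : ℝ | x ∈ Set.Icc (0:ℝ) 1 ∧ ∃ a b : ℤ,
        (∃ a₁ a₂ : ℤ, 0 ≤ a₁ ∧ a₁ ≤ (n:ℤ) ∧ 0 ≤ a₂ ∧ a₂ ≤ (n:ℤ) ∧ a = a₁ - a₂) ∧
        (∃ b₁ b₂ : ℤ, 0 ≤ b₁ ∧ b₁ ≤ (n:ℤ) ∧ (m:ℤ) ∣ b₁ ∧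
          0 ≤ b₂ ∧ b₂ ≤ (n:ℤ) ∧ (m:ℤ) ∣ b₂ ∧ b = b₁ - b₂) ∧
        b ≠ 0 ∧ |(b:ℝ)| ≤ c * n ∧
        (∃ y ∈ Set.Icc (0:ℝ) 1, |(a:ℝ) - (b:ℝ) * y| ≤ 1 / n) ∧
        |x - (a:ℝ) / (b:ℝ)| ≤ 2 * m / (|(b:ℝ)| * n)} ⊆ T := by
    rintro x ⟨hx01, a, b, ⟨a₁, a₂, ha₁0, ha₁n, ha₂0, ha₂n, ha⟩,
      ⟨b₁, b₂, hb₁0, hb₁n, hb₁d, hb₂0, hb₂n, hb₂d, hb⟩, hb0, hbc,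
      ⟨y, hy, hay⟩, hxab⟩
    have hbd : (m:ℤ) ∣ b := hb ▸ dvd_sub hb₁d hb₂d
    obtain ⟨k, hk⟩ := hbd
    have hk0 : k ≠ 0 := by rintro rfl; simp at hk; exact hb0 hk
    have hbR : (b:ℝ) = (m:ℝ) * k := by rw [hk]; push_cast; ring
    have hkM : |k| ≤ M := by
      rw [hM]
      apply Int.le_floor.mpr
      rw [le_div_iff₀ hmpos]
      have : |(b:ℝ)| = (m:ℝ) * |(k:ℝ)| := by
        rw [hbR, abs_mul, abs_of_pos hmpos]
      push_cast
      calc |(k:ℝ)| * m = (m:ℝ) * |(k:ℝ)| := by ring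
        _ = |(b:ℝ)| := this.symm
        _ ≤ c * n := hbc
    have hkmem : k ∈ Fk := by
      rw [hFk]
      refine Finset.mem_erase.mpr ⟨hk0, Finset.mem_Icc.mpr ⟨?_, ?_⟩⟩
      · linarith [(abs_le.mp hkM).1, neg_abs_le k]
      · exact le_trans (le_abs_self k) hkM
    have haI : a ∈ Finset.Icc (-(|(m:ℤ) * k| + 1)) (|(m:ℤ) * k| + 1) := by
      have habs : |(a:ℝ)| ≤ |(b:ℝ)| + 1 := by
        have h1n : (1:ℝ) / n ≤ 1 := by
          rw [div_le_one hnpos]; exact_mod_cast hn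
        have hby : |(b:ℝ) * y| ≤ |(b:ℝ)| := by
          rw [abs_mul]
          calc |(b:ℝ)| * |y| ≤ |(b:ℝ)| * 1 := by
                have : |y| ≤ 1 := abs_le.mpr ⟨by linarith [hy.1], hy.2⟩
                exact mul_le_mul_of_nonneg_left this (abs_nonneg _)
            _ = |(b:ℝ)| := mul_one _
        calc |(a:ℝ)| = |((a:ℝ) - b * y) + b * y| := by ring_nf
          _ ≤ |(a:ℝ) - b * y| + |(b:ℝ) * y| := abs_add_le _ _
          _ ≤ 1 / n + |(b:ℝ)| := add_le_add hay hby
          _ ≤ |(b:ℝ)| + 1 := by linarith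
      have habsZ : |a| ≤ |(m:ℤ) * k| + 1 := by
        rw [hbR] at habs
        exact_mod_cast habs
      exact Finset.mem_Icc.mpr (abs_le.mp habsZ)
    rw [hT]
    refine Set.mem_biUnion hkmem (Set.mem_biUnion haI ?_)
    rw [Metric.mem_closedBall, Real.dist_eq, ← hbR]
    exact hxab
  have key : ∀ k ∈ Fk,
      ∑ a ∈ Finset.Icc (-(|(m:ℤ) * k| + 1)) (|(m:ℤ) * k| + 1),
        volume (Metric.closedBall ((a:ℝ) / ((m:ℝ) * k)) (2 * m / (|(m:ℝ) * k| * n)))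
      ≤ ENNReal.ofReal (20 * m / n) := by
    intro k hkm
    have hk0 : k ≠ 0 := (Finset.mem_erase.mp hkm).1
    have hkabs : (1:ℤ) ≤ |(m:ℤ) * k| :=
      Int.one_le_abs (mul_ne_zero (by exact_mod_cast hm.ne') hk0)
    have hbabs : (1:ℝ) ≤ |(m:ℝ) * k| := by
      have : ((|(m:ℤ) * k| : ℤ) : ℝ) = |(m:ℝ) * k| := by push_cast [Int.cast_abs]; ring_nf
      rw [← this]; exact_mod_cast hkabs
    have hbpos : (0:ℝ) < |(m:ℝ) * k| := lt_of_lt_of_le one_pos hbabs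
    have h3 : ((|(m:ℤ) * k| : ℤ) : ℝ) = |(m:ℝ) * k| := by push_cast; ring_nf
    have hcard : ((Finset.Icc (-(|(m:ℤ) * k| + 1)) (|(m:ℤ) * k| + 1)).card : ℝ)
        ≤ 5 * |(m:ℝ) * k| := by
      have hcZ : ((Finset.Icc (-(|(m:ℤ) * k| + 1)) (|(m:ℤ) * k| + 1)).card : ℤ)
          = 2 * |(m:ℤ) * k| + 3 := by
        rw [Int.card_Icc]
        generalize |(m:ℤ) * k| = B at hkabs ⊢
        omega
      have : ((Finset.Icc (-(|(m:ℤ) * k| + 1)) (|(m:ℤ) * k| + 1)).card : ℝ)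
          = 2 * ((|(m:ℤ) * k| : ℤ) : ℝ) + 3 := by exact_mod_cast hcZ
      rw [this, h3]
      nlinarith
    calc ∑ a ∈ Finset.Icc (-(|(m:ℤ) * k| + 1)) (|(m:ℤ) * k| + 1),
          volume (Metric.closedBall ((a:ℝ) / ((m:ℝ) * k)) (2 * m / (|(m:ℝ) * k| * n)))
        = ∑ a ∈ Finset.Icc (-(|(m:ℤ) * k| + 1)) (|(m:ℤ) * k| + 1),
            ENNReal.ofReal (2 * (2 * m / (|(m:ℝ) * k| * n))) := by
          refine Finset.sum_congr rfl fun a _ => ?_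
          rw [Real.volume_closedBall]
      _ = ((Finset.Icc (-(|(m:ℤ) * k| + 1)) (|(m:ℤ) * k| + 1)).card : ℝ≥0∞)
            * ENNReal.ofReal (2 * (2 * m / (|(m:ℝ) * k| * n))) := by
          rw [Finset.sum_const, nsmul_eq_mul]
      _ ≤ ENNReal.ofReal (20 * m / n) := by
          rw [← ENNReal.ofReal_natCast, ← ENNReal.ofReal_mul (by positivity)]
          apply ENNReal.ofReal_le_ofReal
          have hr : (0:ℝ) ≤ 2 * (2 * m / (|(m:ℝ) * k| * n)) := by positivity
          calc ((Finset.Icc (-(|(m:ℤ) * k| + 1)) (|(m:ℤ) * k| + 1)).card : ℝ)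
                * (2 * (2 * m / (|(m:ℝ) * k| * n)))
              ≤ (5 * |(m:ℝ) * k|) * (2 * (2 * m / (|(m:ℝ) * k| * n))) :=
                mul_le_mul_of_nonneg_right hcard hr
            _ = 20 * m / n := by field_simp; ring
  have hcardFk : (Fk.card : ℝ) ≤ 2 * (c * n / m) := by
    have h0 : (0:ℤ) ∈ Finset.Icc (-M) M := Finset.mem_Icc.mpr ⟨by linarith, hMnn⟩
    have hcZ : (Fk.card : ℤ) = 2 * M := by
      rw [hFk, Finset.card_erase_of_mem h0, Int.card_Icc]
      omega
    have h1 : (Fk.card : ℝ) = 2 * (M : ℝ) := by exact_mod_cast hcZ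
    have hMle : (M : ℝ) ≤ c * n / m := Int.floor_le _
    rw [h1]; linarith
  have hvolT : volume T ≤ ENNReal.ofReal (40 * c) := by
    calc volume T ≤ ∑ k ∈ Fk, volume (⋃ a ∈ Finset.Icc (-(|(m:ℤ) * k| + 1)) (|(m:ℤ) * k| + 1),
            Metric.closedBall ((a:ℝ) / ((m:ℝ) * k)) (2 * m / (|(m:ℝ) * k| * n))) :=
          measure_biUnion_finset_le _ _
      _ ≤ ∑ k ∈ Fk, ∑ a ∈ Finset.Icc (-(|(m:ℤ) * k| + 1)) (|(m:ℤ) * k| + 1),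
            volume (Metric.closedBall ((a:ℝ) / ((m:ℝ) * k)) (2 * m / (|(m:ℝ) * k| * n))) :=
          Finset.sum_le_sum fun k _ => measure_biUnion_finset_le _ _
      _ ≤ ∑ k ∈ Fk, ENNReal.ofReal (20 * m / n) := Finset.sum_le_sum key
      _ = (Fk.card : ℝ≥0∞) * ENNReal.ofReal (20 * m / n) := by
          rw [Finset.sum_const, nsmul_eq_mul]
      _ ≤ ENNReal.ofReal (40 * c) := by
          rw [← ENNReal.ofReal_natCast, ← ENNReal.ofReal_mul (Nat.cast_nonneg _)]
          apply ENNReal.ofReal_le_ofReal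
          calc (Fk.card : ℝ) * (20 * m / n) ≤ (2 * (c * n / m)) * (20 * m / n) := by
                apply mul_le_mul_of_nonneg_right hcardFk (by positivity)
            _ = 40 * c := by field_simp; ring
  exact ENNReal.toReal_le_of_le_ofReal (by linarith)
    (le_trans (measure_mono hsub) hvolT)
end

section
/- Let f : [0,m] → ℝ be a non-decreasing d-Lipschitz function with f(0) = 0, and suppose there are points 0 = a₀ < a₁ < ... < aₙ = m and slopes 0 ≤ t₀ < t₁ < ... < t_{n−1} ≤ d such that (f, aⱼ, a_{j+1}) is (tⱼ, 0)-superlinear for each j, and Σⱼ (a_{j+1} − aⱼ)·tⱼ ≥ f(m) − εm. Let F be the piecewise affine function with F(0) = 0 and slope tⱼ on [aⱼ, a_{j+1}]. Then F(aⱼ) ≤ f(aⱼ) ≤ F(aⱼ) + εm for all j ∈ {0,...,n−1}, and consequently |f(aᵢ) − f(aⱼ) − (F(aᵢ) − F(aⱼ))| ≤ εm for all i, j ∈ {0,...,n−1}. -/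
/-- If a non-decreasing `d`-Lipschitz `f : [0,m] → ℝ` with `f(0) = 0` admits a
superlinearity decomposition with breakpoints `a₀ = 0 < ⋯ < aₙ = m`, strictly
increasing slopes `0 ≤ t₀ < ⋯ < t_{n−1} ≤ d`, and total slope mass
`Σ (a_{j+1}−aⱼ)tⱼ ≥ f(m) − εm`, then the piecewise affine interpolant `F`
(determined by its breakpoint values `F(aₖ) = Σ_{j<k} tⱼ(a_{j+1}−aⱼ)`) satisfies
`F(aⱼ) ≤ f(aⱼ) ≤ F(aⱼ) + εm`, and hence
`|f(aᵢ) − f(aⱼ) − (F(aᵢ) − F(aⱼ))| ≤ εm` for all `i, j < n`. -/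
theorem stmt7 (m d ε : ℝ) (hm : 0 < m) (hd : 0 < d) (hε : 0 ≤ ε)
    (f : ℝ → ℝ) (hf0 : f 0 = 0)
    (hmono : MonotoneOn f (Set.Icc 0 m))
    (hlip : ∀ x ∈ Set.Icc (0:ℝ) m, ∀ y ∈ Set.Icc (0:ℝ) m, |f x - f y| ≤ d * |x - y|)
    (n : ℕ) (hn : 0 < n) (a t : ℕ → ℝ)
    (ha0 : a 0 = 0) (han : a n = m)
    (hainc : ∀ j < n, a j < a (j + 1))
    (ht0 : 0 ≤ t 0) (htinc : ∀ j, j + 1 < n → t j < t (j + 1)) (htd : t (n - 1) ≤ d)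
    (hsuper : ∀ j < n, ∀ x ∈ Set.Icc (a j) (a (j + 1)),
      f (a j) + t j * (x - a j) ≤ f x)
    (hsum : f m - ε * m ≤ ∑ j ∈ Finset.range n, (a (j + 1) - a j) * t j)
    (F : ℕ → ℝ) (hF : ∀ k, F k = ∑ j ∈ Finset.range k, t j * (a (j + 1) - a j)) :
    (∀ j < n, F j ≤ f (a j) ∧ f (a j) ≤ F j + ε * m) ∧
    (∀ i < n, ∀ j < n, |f (a i) - f (a j) - (F i - F j)| ≤ ε * m) := by
  have hFsucc : ∀ k, F (k + 1) = F k + t k * (a (k + 1) - a k) := by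
    intro k; rw [hF, hF, Finset.sum_range_succ]
  have hstep : ∀ k < n, f (a k) - F k ≤ f (a (k + 1)) - F (k + 1) := by
    intro k hk
    have hle := hsuper k hk (a (k + 1)) ⟨(hainc k hk).le, le_refl _⟩
    rw [hFsucc]; linarith
  have hmonog : ∀ q, q ≤ n → ∀ p, p ≤ q → f (a p) - F p ≤ f (a q) - F q := by
    intro q
    induction q with
    | zero => intro _ p hp; have : p = 0 := Nat.le_zero.mp hp; subst this; exact le_refl _
    | succ q ih =>
      intro hqn p hp
      rcases Nat.lt_or_ge p (q + 1) with h | h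
      · exact le_trans (ih (Nat.le_of_succ_le hqn) p (Nat.lt_succ_iff.mp h))
          (hstep q hqn)
      · have : p = q + 1 := le_antisymm hp h
        subst this; exact le_refl _
  have hg0 : f (a 0) - F 0 = 0 := by
    rw [hF, ha0, hf0]; simp
  have hgn : f (a n) - F n ≤ ε * m := by
    have : F n = ∑ j ∈ Finset.range n, (a (j + 1) - a j) * t j := by
      rw [hF]; exact Finset.sum_congr rfl fun j _ => mul_comm _ _
    rw [han]; linarith
  have hlow : ∀ j ≤ n, F j ≤ f (a j) := by
    intro j hj
    have := hmonog j hj 0 (Nat.zero_le j)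
    linarith
  have hhigh : ∀ j ≤ n, f (a j) ≤ F j + ε * m := by
    intro j hj
    have := hmonog n (le_refl n) j hj
    linarith
  constructor
  · intro j hj; exact ⟨hlow j hj.le, hhigh j hj.le⟩
  · intro i hi j hj
    have h1 := hlow i hi.le; have h2 := hhigh i hi.le
    have h3 := hlow j hj.le; have h4 := hhigh j hj.le
    rw [abs_le]; constructor <;> linarith
end

section
/- Let s ∈ (0,1], t ∈ [0,2], u > 0, ε ≥ 0, and let β : [0,m] → ℝ be non-decreasing, 2-Lipschitz, with β(0) = 0, β(m) = tm, and β((1 − t/2)m) ≥ (u − ε)m. Set A := (1 − t/2)m. Then for any A₁ ≤ A ≤ A₂ in [0,m] satisfying A₂ − A ≤ (1/2)β(A₂), one has: (β(A₁)/2) + (s/2)(A − A₁) + (s/2)(A₂ − A) + ((1/2)β(A₂) − (A₂ − A)) ≥ (s/2)(u − ε)m. -/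
/-- Exponent bookkeeping inequality in the main case of the minimal-non-concentration
Furstenberg estimate: if `β : [0,m] → ℝ` is non-decreasing, `2`-Lipschitz,
`β(0) = 0`, `β(m) = tm`, `β((1 − t/2)m) ≥ (u − ε)m`, and `A := (1 − t/2)m`,
then for `A₁ ≤ A ≤ A₂` in `[0,m]` with `A₂ − A ≤ (1/2)β(A₂)`:
`β(A₁)/2 + (s/2)(A − A₁) + (s/2)(A₂ − A) + ((1/2)β(A₂) − (A₂ − A)) ≥ (s/2)(u − ε)m`. -/
theorem stmt11 (m s t u ε : ℝ) (hm : 0 < m)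
    (hs0 : 0 < s) (hs1 : s ≤ 1) (ht0 : 0 ≤ t) (ht2 : t ≤ 2) (hu : 0 < u) (hε : 0 ≤ ε)
    (β : ℝ → ℝ)
    (hmono : MonotoneOn β (Set.Icc 0 m))
    (hlip : ∀ x ∈ Set.Icc (0:ℝ) m, ∀ y ∈ Set.Icc (0:ℝ) m, |β x - β y| ≤ 2 * |x - y|)
    (hβ0 : β 0 = 0) (hβm : β m = t * m)
    (A : ℝ) (hA : A = (1 - t / 2) * m)
    (hβA : (u - ε) * m ≤ β A)
    (A₁ A₂ : ℝ) (hA₁0 : 0 ≤ A₁) (hA₁A : A₁ ≤ A) (hAA₂ : A ≤ A₂) (hA₂m : A₂ ≤ m)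
    (hkey : A₂ - A ≤ (1 / 2) * β A₂) :
    (s / 2) * (u - ε) * m ≤
      β A₁ / 2 + (s / 2) * (A - A₁) + (s / 2) * (A₂ - A) + ((1 / 2) * β A₂ - (A₂ - A)) := by
  have hAm : A ≤ m := by nlinarith
  have hA0 : 0 ≤ A := by nlinarith
  have hA₁m : A₁ ≤ m := le_trans hA₁A hAm
  have hA₂0 : 0 ≤ A₂ := le_trans hA0 hAA₂
  have hmemA : A ∈ Set.Icc (0:ℝ) m := ⟨hA0, hAm⟩
  have hmemA₁ : A₁ ∈ Set.Icc (0:ℝ) m := ⟨hA₁0, hA₁m⟩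
  have hmemA₂ : A₂ ∈ Set.Icc (0:ℝ) m := ⟨hA₂0, hA₂m⟩
  have h0 : (0:ℝ) ∈ Set.Icc (0:ℝ) m := ⟨le_rfl, hm.le⟩
  have hβA₁0 : 0 ≤ β A₁ := hβ0 ▸ hmono h0 hmemA₁ hA₁0
  have hβAA₂ : β A ≤ β A₂ := hmono hmemA hmemA₂ hAA₂
  have hlipAA₁ : β A - β A₁ ≤ 2 * (A - A₁) := by
    have := hlip A hmemA A₁ hmemA₁
    rw [abs_of_nonneg (sub_nonneg.2 (hmono hmemA₁ hmemA hA₁A)),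
      abs_of_nonneg (sub_nonneg.2 hA₁A)] at this
    exact this
  nlinarith [mul_nonneg (by linarith : (0:ℝ) ≤ 1 - s/2) (by linarith : (0:ℝ) ≤ (1/2) * β A₂ - (A₂ - A)),
    mul_nonneg hs0.le (sub_nonneg.2 hAA₂)]
end
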